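/- arXiv:1503.04893 — 2 statements merged into one kernel-verified Lean document; each statement's English description precedes it below -/
import Mathlib

section
/- Let w₁, w₂, w₃ be positive integers, y₁, y₂ nonnegative integers and n a positive integer. Define E₄(w₁,w₂,w₃) = n ∑_{k=0}^{n−1} binom(n−1,k) · β_{k,q^{w₂w₃}}^{(n−k+1)}(w₁y₁) · q^{w₁w₂w₃(n−k)y₁} · q^{w₁w₂w₃ y₂} · [w₁w₂]_q · [w₂w₃]_q^k · [w₁w₃]_q^{n−1−k} · ∑_{i=0}^{w₃−1} q^{2w₁w₂ i} · β_{n−1−k,q^{w₁w₃}}^{(2)}(w₂y₂ + (w₂/w₃)i) + (q−1) ∑_{k=0}^{n} binom(n,k) · β_{k,q^{w₂w₃}}^{(n−k+1)}(w₁y₁) · q^{w₁w₂w₃(n−k)y₁} · [w₁w₂]_q · [w₂w₃]_q^k · [w₁w₃]_q^{n−k} · ∑_{i=0}^{w₃−1} q^{w₁w₂ i} · β_{n−k,q^{w₁w₃}}(w₂y₂ + (w₂/w₃)i). Then E₄(w_{σ(1)}, w_{σ(2)}, w_{σ(3)}) = E₄(w₁, w₂, w₃) for every permutation σ of {1,2,3}.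 -/
open Finset

/-- The `q`-number `[x]_q = (1 - q^x)/(1 - q)` of a nonnegative integer `x`. -/
noncomputable def qnum {K : Type*} [Field K] (q : K) (x : ℕ) : K :=
  (1 - q ^ x) / (1 - q)

/-- The generalized Carlitz `q`-Bernoulli polynomials with the value `Q^x` given
explicitly as `X` (so `Q^{jx}` is interpreted as `X^j`):
`β_{n,Q}^{(h)}(x) = (1-Q)^{-n} ∑_{j=0}^{n} C(n,j) (-1)^j X^j (j+h)/[j+h]_Q`.
This allows rational arguments `x` for which `Q^x` is an integer power of `q`. -/
noncomputable def carlitzBetaGen {K : Type*} [Field K] (Q X : K) (h n : ℕ) : K :=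
  ((1 - Q) ^ n)⁻¹ * ∑ j ∈ Finset.range (n + 1),
    (n.choose j : K) * (-1) ^ j * X ^ j * ((j + h : ℕ) : K) / qnum Q (j + h)

/-- The generalized Carlitz `q`-Bernoulli polynomials
`β_{n,q}^{(h)}(x) = (1-q)^{-n} ∑_{j=0}^{n} C(n,j) (-1)^j q^{jx} (j+h)/[j+h]_q`
at a nonnegative integer argument `x`. -/
noncomputable def carlitzBetaH {K : Type*} [Field K] (q : K) (h n x : ℕ) : K :=
  carlitzBetaGen q (q ^ x) h n

/-- The expression `E₄(w₁,w₂,w₃)` of Statement 3 (Theorem 4 of the paper); the value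
`β_{n,Q}^{(h)}(w₂y₂ + (w₂/w₃)i)` with `Q = q^{w₁w₃}` is interpreted via
`Q^{j(w₂y₂ + (w₂/w₃)i)} = q^{j(w₁w₂w₃y₂ + w₁w₂ i)}`. -/
noncomputable def E4 {K : Type*} [Field K] (q : K) (n y1 y2 w1 w2 w3 : ℕ) : K :=
  (n : K) *
    (∑ k ∈ Finset.range n,
      ((n - 1).choose k : K) *
        carlitzBetaH (q ^ (w2 * w3)) (n - k + 1) k (w1 * y1) *
        q ^ (w1 * w2 * w3 * (n - k) * y1) * q ^ (w1 * w2 * w3 * y2) *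
        qnum q (w1 * w2) * qnum q (w2 * w3) ^ k * qnum q (w1 * w3) ^ (n - 1 - k) *
        ∑ i ∈ Finset.range w3,
          q ^ (2 * (w1 * w2) * i) *
            carlitzBetaGen (q ^ (w1 * w3)) (q ^ (w1 * w2 * w3 * y2 + w1 * w2 * i)) 2
              (n - 1 - k))
  + (q - 1) *
    ∑ k ∈ Finset.range (n + 1),
      (n.choose k : K) *
        carlitzBetaH (q ^ (w2 * w3)) (n - k + 1) k (w1 * y1) *
        q ^ (w1 * w2 * w3 * (n - k) * y1) *
        qnum q (w1 * w2) * qnum q (w2 * w3) ^ k * qnum q (w1 * w3) ^ (n - k) *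
        ∑ i ∈ Finset.range w3,
          q ^ (w1 * w2 * i) *
            carlitzBetaGen (q ^ (w1 * w3)) (q ^ (w1 * w2 * w3 * y2 + w1 * w2 * i)) 1
              (n - k)

/-!
Expanding each Carlitz polynomial by its defining sum turns the sum over `i` into a geometric
sum, and the convolution over `k` of the two expansions collapses because the binomial transform
`g ↦ (n ↦ ∑ₗ C(n,l) (-1)^l g l)` is an involution. With `m = w₁w₂w₃`, `x = q^(m(y₁+y₂))` and
`T_d(r) = ∑_{u ≤ r} C(r,u) (-x)^u (u+d)² [m(u+d)]_q / ∏_{i<j} [u+d]_{q^(wᵢwⱼ)}`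
this gives `E₄(w₁,w₂,w₃) = (1-q)^(1-n) (n x T₂(n-1) - T₁(n))`, which depends on the weights only
through `m` and the multiset of pairwise products `wᵢwⱼ`.
-/

section BinomialTransform

variable {R : Type*} [CommRing R]

def binomialTransform (g : ℕ → R) (n : ℕ) : R :=
  ∑ l ∈ range (n + 1), (n.choose l : R) * (-1) ^ l * g l

theorem sum_range_neg_one_pow_mul_choose (n : ℕ) :
    ∑ m ∈ range (n + 1), (-1 : R) ^ m * (n.choose m : R) = if n = 0 then 1 else 0 := by
  exact_mod_cast congrArg (Int.cast (R := R)) Int.alternating_sum_range_choose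

theorem binomialTransform_binomialTransform (g : ℕ → R) :
    binomialTransform (binomialTransform g) = g := by
  funext u
  have hchoose : ∀ s ∈ range (u + 1), ∀ l ∈ range (s + 1),
      (u.choose s : R) * (-1) ^ s * ((s.choose l : R) * (-1) ^ l * g l)
        = (u.choose l : R) * (-1) ^ l * g l * ((-1) ^ s * ((u - l).choose (s - l) : R)) := by
    intro s _ l hl
    rw [mem_range, Nat.lt_succ_iff] at hl
    have h := congrArg (Nat.cast (R := R)) (Nat.choose_mul (n := u) hl)
    push_cast at h
    linear_combination (-1 : R) ^ s * (-1) ^ l * g l * h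
  have hinner : ∀ l ∈ range (u + 1),
      ∑ s ∈ Ico l (u + 1), (-1 : R) ^ s * ((u - l).choose (s - l) : R)
        = if u = l then (-1) ^ l else 0 := by
    intro l hl
    rw [mem_range] at hl
    rw [sum_Ico_eq_sum_range, show u + 1 - l = u - l + 1 by omega]
    simp only [pow_add, add_tsub_cancel_left, mul_assoc, ← mul_sum,
      sum_range_neg_one_pow_mul_choose]
    rcases eq_or_ne u l with rfl | hne
    · simp
    · simp [hne, show u - l ≠ 0 by omega]
  simp only [binomialTransform, mul_sum]
  rw [sum_congr rfl fun s hs => sum_congr rfl (hchoose s hs)]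
  simp only [range_eq_Ico]
  rw [← sum_Ico_Ico_comm, ← range_eq_Ico]
  simp only [← mul_sum]
  rw [sum_congr rfl fun l hl => congrArg _ (hinner l hl),
    sum_eq_single_of_mem u (self_mem_range_succ u)]
  · rw [if_pos rfl, Nat.choose_self, Nat.cast_one, one_mul, mul_right_comm, ← pow_add,
      Even.neg_one_pow ⟨u, rfl⟩, one_mul]
  · intro l _ hlu
    simp [Ne.symm hlu]

theorem sum_range_sum_range_reindex {M : Type*} [AddCommMonoid M] (n : ℕ) (F : ℕ → ℕ → M) :
    ∑ k ∈ range (n + 1), ∑ j ∈ range (k + 1), F k j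
      = ∑ u ∈ range (n + 1), ∑ s ∈ range (u + 1), F (n - s) (u - s) := by
  rw [sum_sigma', sum_sigma']
  refine sum_nbij' (fun p => ⟨n - p.1 + p.2, n - p.1⟩) (fun p => ⟨n - p.2, p.1 - p.2⟩)
    ?_ ?_ ?_ ?_ ?_ <;>
    simp only [mem_sigma, mem_range, Sigma.forall, Sigma.mk.injEq, heq_eq_eq] <;>
    intro a b <;> first | omega | (intro h; congr <;> omega)

theorem sum_choose_mul_sum_choose_mul_binomialTransform (n : ℕ) (γ : R) (f g : ℕ → R) :
    ∑ k ∈ range (n + 1), (n.choose k : R) * γ ^ (n - k) *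
        (∑ j ∈ range (k + 1), (k.choose j : R) * (-1) ^ j * γ ^ j * f (n - k + j)) *
        binomialTransform g (n - k)
      = ∑ u ∈ range (n + 1), (n.choose u : R) * (-1) ^ u * γ ^ u * f u * g u := by
  simp only [mul_sum, sum_mul]
  rw [sum_range_sum_range_reindex]
  refine sum_congr rfl fun u hu => ?_
  have hterm : ∀ s ∈ range (u + 1),
      (n.choose (n - s) : R) * γ ^ (n - (n - s)) *
          ((((n - s).choose (u - s) : R) * (-1) ^ (u - s) * γ ^ (u - s) *
            f (n - (n - s) + (u - s)))) * binomialTransform g (n - (n - s))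
        = (n.choose u : R) * (-1) ^ u * γ ^ u * f u *
          ((u.choose s : R) * (-1) ^ s * binomialTransform g s) := by
    intro s hs
    rw [mem_range] at hu hs
    have hchoose : (n.choose (n - s) : R) * ((n - s).choose (u - s) : R)
        = (n.choose u : R) * (u.choose s : R) := by
      rw [Nat.choose_symm (by omega), ← Nat.cast_mul, ← Nat.cast_mul,
        Nat.choose_mul (Nat.lt_succ_iff.mp hs)]
    obtain ⟨t, rfl⟩ : ∃ t, u = s + t := ⟨u - s, by omega⟩
    rw [show n - (n - s) = s by omega, Nat.add_sub_cancel_left] at *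
    have hsq : (-1 : R) ^ s * (-1) ^ s = 1 := by rw [← pow_add, Even.neg_one_pow ⟨s, rfl⟩]
    linear_combination (-1 : R) ^ t * γ ^ (s + t) * f (s + t) * binomialTransform g s * hchoose
      - (n.choose (s + t) : R) * ((s + t).choose s : R) * (-1) ^ t * γ ^ (s + t) * f (s + t) *
        binomialTransform g s * hsq
  rw [sum_congr rfl hterm, ← mul_sum]
  change _ * binomialTransform (binomialTransform g) u = _
  rw [binomialTransform_binomialTransform]

end BinomialTransform

theorem comp_perm_eq_of_swap_castSucc_succ {α β : Type*} {n : ℕ} (F : (Fin (n + 1) → α) → β)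
    (hF : ∀ (i : Fin n) (w : Fin (n + 1) → α), F (w ∘ Equiv.swap i.castSucc i.succ) = F w)
    (σ : Equiv.Perm (Fin (n + 1))) (w : Fin (n + 1) → α) : F (w ∘ σ) = F w := by
  have hσ : σ ∈ Submonoid.closure (Set.range fun i : Fin n => Equiv.swap i.castSucc i.succ) := by
    rw [Equiv.Perm.mclosure_swap_castSucc_succ]
    trivial
  induction hσ using Submonoid.closure_induction generalizing w with
  | mem τ hτ =>
    obtain ⟨i, rfl⟩ := hτ
    exact hF i w
  | one => rfl
  | mul τ υ _ _ hτ hυ =>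
    rw [Equiv.Perm.coe_mul, ← Function.comp_assoc, hυ, hτ]

section QNumber

variable {K : Type*} [Field K]

theorem qnum_eq_zero_iff {x : K} {s : ℕ} : qnum x s = 0 ↔ x ^ s = 1 := by
  rw [qnum, div_eq_zero_iff, sub_eq_zero, sub_eq_zero, eq_comm, or_iff_left_iff_imp]
  rintro rfl
  exact one_pow s

theorem qnum_mul (x : K) (a b : ℕ) : qnum x (a * b) = qnum x a * qnum (x ^ a) b := by
  by_cases hxa : x ^ a = 1
  · rw [qnum_eq_zero_iff.mpr (by rw [pow_mul, hxa, one_pow]), qnum_eq_zero_iff.mpr hxa,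
      zero_mul]
  · have hx : x ≠ 1 := by rintro rfl; exact hxa (one_pow a)
    have h1 : (1 : K) - x ≠ 0 := sub_ne_zero.mpr hx.symm
    have h2 : (1 : K) - x ^ a ≠ 0 := sub_ne_zero.mpr (Ne.symm hxa)
    rw [qnum, qnum, qnum, pow_mul]
    field_simp

theorem geom_sum_eq_qnum {x : K} (hx : x ≠ 1) (c : ℕ) : ∑ i ∈ range c, x ^ i = qnum x c := by
  rw [geom_sum_eq hx, qnum, ← neg_sub 1, ← neg_sub 1 x, neg_div_neg_eq]

end QNumber

section CarlitzExpansion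

variable {K : Type*} [Field K] {q : K}

theorem qnum_pow_mul_carlitzBetaGen {p : ℕ} (hp : q ^ p ≠ 1) (X : K) (h r : ℕ) :
    qnum q p ^ r * carlitzBetaGen (q ^ p) X h r
      = ((1 - q) ^ r)⁻¹ * ∑ j ∈ range (r + 1),
          (r.choose j : K) * (-1) ^ j * X ^ j * ((j + h : ℕ) : K) / qnum (q ^ p) (j + h) := by
  have h1 : (1 : K) - q ^ p ≠ 0 := sub_ne_zero.mpr (Ne.symm hp)
  rw [carlitzBetaGen, ← mul_assoc, qnum, div_pow, div_mul_eq_mul_div, mul_inv_cancel₀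
    (pow_ne_zero r h1), one_div]

theorem qnum_pow_mul_sum_carlitzBetaGen (hq' : ∀ n : ℕ, 0 < n → q ^ n ≠ 1) {p e h : ℕ}
    (hp : 0 < p) (he : 0 < e) (hh : 0 < h) (c r Y : ℕ) :
    qnum q p ^ r * ∑ i ∈ range c, q ^ (h * e * i) * carlitzBetaGen (q ^ p) (q ^ (Y + e * i)) h r
      = ((1 - q) ^ r)⁻¹ * ∑ l ∈ range (r + 1),
          (r.choose l : K) * (-1) ^ l * (q ^ Y) ^ l * ((l + h : ℕ) : K) / qnum (q ^ p) (l + h) *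
            qnum (q ^ (e * (l + h))) c := by
  have hpow : ∀ i l : ℕ, q ^ (h * e * i) * (q ^ (Y + e * i)) ^ l
      = (q ^ Y) ^ l * (q ^ (e * (l + h))) ^ i := by
    intro i l
    simp only [← pow_mul, ← pow_add]
    ring_nf
  simp only [mul_sum, mul_left_comm (qnum q p ^ r), qnum_pow_mul_carlitzBetaGen (hq' p hp)]
  rw [sum_comm]
  refine sum_congr rfl fun l _ => ?_
  rw [← geom_sum_eq_qnum (x := q ^ (e * (l + h))) (hq' _ (by positivity)), mul_sum, mul_sum]
  refine sum_congr rfl fun i _ => ?_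
  linear_combination ((1 - q) ^ r)⁻¹ * (r.choose l : K) * (-1) ^ l * ((l + h : ℕ) : K) /
    qnum (q ^ p) (l + h) * hpow i l

end CarlitzExpansion

section SymmetricForm

variable {K : Type*} [Field K]

noncomputable def E4Sum (q : K) (y1 y2 a b c d r : ℕ) : K :=
  ∑ k ∈ range (r + 1), (r.choose k : K) * (q ^ (a * b * c * y1)) ^ (r - k) *
    (qnum q (b * c) ^ k * carlitzBetaH (q ^ (b * c)) (r - k + d) k (a * y1)) *
    (qnum q (a * c) ^ (r - k) * ∑ i ∈ range c, q ^ (d * (a * b) * i) *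
      carlitzBetaGen (q ^ (a * c)) (q ^ (a * b * c * y2 + a * b * i)) d (r - k))

theorem E4_eq_E4Sum (q : K) (n y1 y2 a b c : ℕ) :
    E4 q n y1 y2 a b c = qnum q (a * b) * ((n : K) * q ^ (a * b * c * y2) * q ^ (a * b * c * y1) *
      E4Sum q y1 y2 a b c 2 (n - 1) + (q - 1) * E4Sum q y1 y2 a b c 1 n) := by
  have hsum₁ : ∀ k ∈ range (n + 1), (n.choose k : K) *
        carlitzBetaH (q ^ (b * c)) (n - k + 1) k (a * y1) *
        q ^ (a * b * c * (n - k) * y1) *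
        qnum q (a * b) * qnum q (b * c) ^ k * qnum q (a * c) ^ (n - k) *
        ∑ i ∈ range c, q ^ (a * b * i) *
          carlitzBetaGen (q ^ (a * c)) (q ^ (a * b * c * y2 + a * b * i)) 1 (n - k)
      = qnum q (a * b) * ((n.choose k : K) * (q ^ (a * b * c * y1)) ^ (n - k) *
        (qnum q (b * c) ^ k * carlitzBetaH (q ^ (b * c)) (n - k + 1) k (a * y1)) *
        (qnum q (a * c) ^ (n - k) * ∑ i ∈ range c, q ^ (1 * (a * b) * i) *
          carlitzBetaGen (q ^ (a * c)) (q ^ (a * b * c * y2 + a * b * i)) 1 (n - k))) := by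
    intro k _
    rw [one_mul, ← pow_mul, mul_right_comm (a * b * c)]
    ring
  cases n with
  | zero =>
    rw [E4, E4Sum, sum_congr rfl hsum₁, ← mul_sum]
    simp only [Nat.cast_zero, range_zero, zero_tsub, zero_add, mul_zero, zero_mul, pow_zero,
      mul_one, sum_empty, range_one, one_mul, sum_singleton, Nat.choose_self, Nat.cast_one, E4Sum]
    ring
  | succ r =>
    have hsum₂ : ∀ k ∈ range (r + 1), ((r + 1 - 1).choose k : K) *
          carlitzBetaH (q ^ (b * c)) (r + 1 - k + 1) k (a * y1) *
          q ^ (a * b * c * (r + 1 - k) * y1) * q ^ (a * b * c * y2) *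
          qnum q (a * b) * qnum q (b * c) ^ k * qnum q (a * c) ^ (r + 1 - 1 - k) *
          ∑ i ∈ range c, q ^ (2 * (a * b) * i) *
            carlitzBetaGen (q ^ (a * c)) (q ^ (a * b * c * y2 + a * b * i)) 2 (r + 1 - 1 - k)
        = qnum q (a * b) * (q ^ (a * b * c * y2) * q ^ (a * b * c * y1) *
          ((r.choose k : K) * (q ^ (a * b * c * y1)) ^ (r - k) *
          (qnum q (b * c) ^ k * carlitzBetaH (q ^ (b * c)) (r - k + 2) k (a * y1)) *
          (qnum q (a * c) ^ (r - k) * ∑ i ∈ range c, q ^ (2 * (a * b) * i) *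
            carlitzBetaGen (q ^ (a * c)) (q ^ (a * b * c * y2 + a * b * i)) 2 (r - k)))) := by
      intro k hk
      rw [mem_range] at hk
      rw [Nat.add_sub_cancel, show r + 1 - k = r - k + 1 by omega,
        show r - k + 1 + 1 = r - k + 2 by omega, ← pow_mul, mul_right_comm (a * b * c)]
      ring
    rw [E4, E4Sum, E4Sum, sum_congr rfl hsum₂, sum_congr rfl hsum₁, ← mul_sum, ← mul_sum,
      ← mul_sum]
    simp only [Nat.add_sub_cancel]
    ring

noncomputable def qTripleSum (q x : K) (m p₁ p₂ p₃ d r : ℕ) : K :=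
  ∑ u ∈ range (r + 1), (r.choose u : K) * (-x) ^ u * ((u + d : ℕ) : K) ^ 2 * qnum q (m * (u + d)) /
    (qnum (q ^ p₁) (u + d) * qnum (q ^ p₂) (u + d) * qnum (q ^ p₃) (u + d))

theorem qTripleSum_comm₁₃ (q x : K) (m p₁ p₂ p₃ d r : ℕ) :
    qTripleSum q x m p₁ p₂ p₃ d r = qTripleSum q x m p₃ p₂ p₁ d r :=
  sum_congr rfl fun _ _ => by ring

theorem qTripleSum_comm₂₃ (q x : K) (m p₁ p₂ p₃ d r : ℕ) :
    qTripleSum q x m p₁ p₂ p₃ d r = qTripleSum q x m p₁ p₃ p₂ d r :=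
  sum_congr rfl fun _ _ => by ring

theorem qnum_mul_E4Sum {q : K} (hq' : ∀ n : ℕ, 0 < n → q ^ n ≠ 1) {a b c d : ℕ}
    (ha : 0 < a) (hb : 0 < b) (hc : 0 < c) (hd : 0 < d) (y1 y2 r : ℕ) :
    qnum q (a * b) * E4Sum q y1 y2 a b c d r = ((1 - q) ^ r)⁻¹ *
      qTripleSum q (q ^ (a * b * c * (y1 + y2))) (a * b * c) (a * b) (b * c) (a * c) d r := by
  have hqnum : ∀ {p s : ℕ}, 0 < p → 0 < s → qnum (q ^ p) s ≠ 0 := fun hp hs => by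
    rw [Ne, qnum_eq_zero_iff, ← pow_mul]
    exact hq' _ (Nat.mul_pos hp hs)
  set γ := q ^ (a * b * c * y1)
  set f : ℕ → K := fun u => ((u + d : ℕ) : K) / qnum (q ^ (b * c)) (u + d)
  set g : ℕ → K := fun l => (q ^ (a * b * c * y2)) ^ l * ((l + d : ℕ) : K) /
    qnum (q ^ (a * c)) (l + d) * qnum (q ^ (a * b * (l + d))) c
  have hterm : ∀ k ∈ range (r + 1),
      (r.choose k : K) * γ ^ (r - k) *
        (qnum q (b * c) ^ k * carlitzBetaH (q ^ (b * c)) (r - k + d) k (a * y1)) *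
        (qnum q (a * c) ^ (r - k) * ∑ i ∈ range c, q ^ (d * (a * b) * i) *
          carlitzBetaGen (q ^ (a * c)) (q ^ (a * b * c * y2 + a * b * i)) d (r - k))
      = ((1 - q) ^ r)⁻¹ * ((r.choose k : K) * γ ^ (r - k) *
        (∑ j ∈ range (k + 1), (k.choose j : K) * (-1) ^ j * γ ^ j * f (r - k + j)) *
        binomialTransform g (r - k)) := by
    intro k hk
    have hpow : ((1 - q) ^ r)⁻¹ = ((1 - q) ^ k)⁻¹ * ((1 - q) ^ (r - k))⁻¹ := by
      rw [← mul_inv, ← pow_add, Nat.add_sub_cancel' (Nat.lt_succ_iff.mp (mem_range.mp hk))]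
    have hf : ∀ j, ((j + (r - k + d) : ℕ) : K) / qnum (q ^ (b * c)) (j + (r - k + d))
        = f (r - k + j) := fun j => by
      simp only [f, show j + (r - k + d) = r - k + j + d by ring]
    have hγ : (q ^ (b * c)) ^ (a * y1) = γ := by rw [← pow_mul]; congr 1; ring
    rw [carlitzBetaH, hγ, qnum_pow_mul_carlitzBetaGen (hq' _ (Nat.mul_pos hb hc)),
      qnum_pow_mul_sum_carlitzBetaGen hq' (Nat.mul_pos ha hc) (Nat.mul_pos ha hb) hd, hpow]
    simp only [binomialTransform, mul_div_assoc, hf, g, mul_assoc]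
    ring
  rw [E4Sum, sum_congr rfl hterm, ← mul_sum, sum_choose_mul_sum_choose_mul_binomialTransform,
    mul_left_comm, mul_sum, qTripleSum]
  congr 1
  refine sum_congr rfl fun u _ => ?_
  have hqnum_abc : qnum q (a * b * c * (u + d))
      = qnum q (a * b) * qnum (q ^ (a * b)) (u + d) * qnum (q ^ (a * b * (u + d))) c := by
    rw [← qnum_mul, ← qnum_mul, show a * b * (u + d) * c = a * b * c * (u + d) by ring]
  have hx : (-q ^ (a * b * c * (y1 + y2))) ^ u = (-1) ^ u * γ ^ u * (q ^ (a * b * c * y2)) ^ u := by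
    simp only [γ]
    ring
  have h₁ := hqnum (Nat.mul_pos ha hb) (Nat.add_pos_right u hd)
  have h₂ := hqnum (Nat.mul_pos hb hc) (Nat.add_pos_right u hd)
  have h₃ := hqnum (Nat.mul_pos ha hc) (Nat.add_pos_right u hd)
  rw [hqnum_abc, hx]
  simp only [f, g]
  field_simp

theorem E4_eq_qTripleSum {q : K} (hq : q ≠ 1) (hq' : ∀ n : ℕ, 0 < n → q ^ n ≠ 1)
    (n y1 y2 a b c : ℕ) :
    E4 q n y1 y2 a b c = (1 - q) / (1 - q) ^ n *
      ((n : K) * q ^ (a * b * c * (y1 + y2)) *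
        qTripleSum q (q ^ (a * b * c * (y1 + y2))) (a * b * c) (a * b) (b * c) (a * c) 2 (n - 1)
      - qTripleSum q (q ^ (a * b * c * (y1 + y2))) (a * b * c) (a * b) (b * c) (a * c) 1 n) := by
  by_cases hpos : 0 < a ∧ 0 < b ∧ 0 < c
  · obtain ⟨ha, hb, hc⟩ := hpos
    have h₂ := qnum_mul_E4Sum hq' ha hb hc two_pos y1 y2 (n - 1)
    have h₁ := qnum_mul_E4Sum hq' ha hb hc one_pos y1 y2 n
    have hx : q ^ (a * b * c * (y1 + y2)) = q ^ (a * b * c * y2) * q ^ (a * b * c * y1) := by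
      rw [mul_add, pow_add, mul_comm]
    have hn : (n : K) * ((1 - q) ^ (n - 1))⁻¹ = n * ((1 - q) / (1 - q) ^ n) := by
      cases n with
      | zero => simp
      | succ r =>
        have : (1 : K) - q ≠ 0 := sub_ne_zero.mpr hq.symm
        rw [Nat.add_sub_cancel, pow_succ]
        field_simp
    set x := q ^ (a * b * c * (y1 + y2))
    set T₂ := qTripleSum q x (a * b * c) (a * b) (b * c) (a * c) 2 (n - 1)
    rw [E4_eq_E4Sum]
    linear_combination (n * q ^ (a * b * c * y2) * q ^ (a * b * c * y1) : K) * h₂ + (q - 1) * h₁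
      + q ^ (a * b * c * y2) * q ^ (a * b * c * y1) * T₂ * hn
      - (1 - q) / (1 - q) ^ n * n * T₂ * hx
  -- A zero weight kills every term: through `[0]_q = 0`, an empty sum over `i`, or a division
  -- by `[s]_1 = 0` (junk value of `qnum`).
  · obtain rfl | rfl | rfl : a = 0 ∨ b = 0 ∨ c = 0 := by omega
    all_goals simp [E4, qTripleSum, qnum]

theorem E4_comm₁₂ {q : K} (hq : q ≠ 1) (hq' : ∀ n : ℕ, 0 < n → q ^ n ≠ 1) (n y1 y2 a b c : ℕ) :
    E4 q n y1 y2 b a c = E4 q n y1 y2 a b c := by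
  simp only [E4_eq_qTripleSum hq hq', Nat.mul_comm b a, qTripleSum_comm₂₃ _ _ _ (a * b) (a * c)]

theorem E4_comm₂₃ {q : K} (hq : q ≠ 1) (hq' : ∀ n : ℕ, 0 < n → q ^ n ≠ 1) (n y1 y2 a b c : ℕ) :
    E4 q n y1 y2 a c b = E4 q n y1 y2 a b c := by
  simp only [E4_eq_qTripleSum hq hq', Nat.mul_comm c b, Nat.mul_right_comm a c b,
    qTripleSum_comm₁₃ _ _ _ (a * c) (b * c) (a * b)]

end SymmetricForm

theorem stmt3_general {K : Type*} [Field K] (q : K) (hq : q ≠ 1)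
    (hq' : ∀ n : ℕ, 0 < n → q ^ n ≠ 1)
    (w : Fin 3 → ℕ) (y1 y2 n : ℕ)
    (σ : Equiv.Perm (Fin 3)) :
    E4 q n y1 y2 (w (σ 0)) (w (σ 1)) (w (σ 2)) = E4 q n y1 y2 (w 0) (w 1) (w 2) := by
  refine comp_perm_eq_of_swap_castSucc_succ (fun v : Fin 3 → ℕ => E4 q n y1 y2 (v 0) (v 1) (v 2))
    (fun i v => ?_) σ w
  fin_cases i
  · exact E4_comm₁₂ hq hq' n y1 y2 (v 0) (v 1) (v 2)
  · exact E4_comm₂₃ hq hq' n y1 y2 (v 0) (v 1) (v 2)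

/-- Theorem 4 of the paper.  The expression `E₄(w₁,w₂,w₃)` is invariant
under any permutation of `(w₁, w₂, w₃)`. -/
theorem stmt3 {K : Type*} [Field K] [CharZero K] (q : K) (hq : q ≠ 1)
    (hq' : ∀ n : ℕ, 0 < n → q ^ n ≠ 1)
    (w : Fin 3 → ℕ) (hw : ∀ i, 0 < w i) (y1 y2 n : ℕ) (hn : 0 < n)
    (σ : Equiv.Perm (Fin 3)) :
    E4 q n y1 y2 (w (σ 0)) (w (σ 1)) (w (σ 2)) = E4 q n y1 y2 (w 0) (w 1) (w 2) :=
  stmt3_general q hq hq' w y1 y2 n σ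
end

section
/- Let w₁, w₂, w₃ be positive integers, y₁, y₂ nonnegative integers and n a positive integer. Then ∑_{k+l+m=n−1} binom(n;k,l,m) · β_{k,q^{w₂w₃}}^{(l+m+2)}(w₁y₁) · β_{l,q^{w₁w₃}}^{(m+2)}(w₂y₂) · T_{2,m}(w₃−1 | q^{w₁w₂}) · q^{w₁w₂w₃(l+m+1)y₁} · q^{w₁w₂w₃(m+1)y₂} · [w₂w₃]_q^k · [w₁w₃]_q^l · [w₁w₂]_q^{m+1} + (q−1) ∑_{k+l+m=n} binom(n;k,l,m) · β_{k,q^{w₂w₃}}^{(l+m+1)}(w₁y₁) · β_{l,q^{w₁w₃}}^{(m+1)}(w₂y₂) · T_{1,m}(w₃−1 | q^{w₁w₂}) · q^{w₁w₂w₃(l+m)y₁} · q^{w₁w₂w₃ m y₂} · [w₂w₃]_q^k · [w₁w₃]_q^l · [w₁w₂]_q^{m+1} = n ∑_{k=0}^{n−1} binom(n−1,k) · β_{k,q^{w₂w₃}}^{(n−k+1)}(w₁y₁) · q^{w₁w₂w₃(n−k)y₁} · q^{w₁w₂w₃ y₂} · [w₁w₂]_q · [w₂w₃]_q^k · [w₁w₃]_q^{n−1−k}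 · ∑_{i=0}^{w₃−1} q^{2w₁w₂ i} · β_{n−1−k,q^{w₁w₃}}^{(2)}(w₂y₂ + (w₂/w₃)i) + (q−1) ∑_{k=0}^{n} binom(n,k) · β_{k,q^{w₂w₃}}^{(n−k+1)}(w₁y₁) · q^{w₁w₂w₃(n−k)y₁} · [w₁w₂]_q · [w₂w₃]_q^k · [w₁w₃]_q^{n−k} · ∑_{i=0}^{w₃−1} q^{w₁w₂ i} · β_{n−k,q^{w₁w₃}}(w₂y₂ + (w₂/w₃)i). -/
/-!
For fixed `k` the sum over `l` collapses. With `g s = (s + h)/[s + h]_Q` one has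
`(1 - Q)^l β_{l,Q}^{(r-l+h)}(Y) = ∑_j binom(l,j) (-Y)^j g(r - l + j)` (where `Y = Q^x`), and
`(1 - P)^m T_{h,m}(W|P) = ∑_i P^{hi} (1 - P^i)^m`. Interchanging the sums over `l` and `i`
leaves, for each `i`, the translation formula
`∑_l binom(r,l) Z^{r-l} (1-Q)^l β_{l,Q}^{(r-l+h)}(Y) = (1-Q)^r β_{r,Q}^{(h)}(Y - Z)`
at `Z = (1 - P^i) Y`, and `Y - Z = Y P^i` is the shifted argument on the right-hand side.
The translation formula is the binomial identity `(aX + (1 + bX))^r = (1 + (a + b)X)^r`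
read through the linear functional `X^s ↦ g s`.
-/

open Finset

/-- The `q`-power sums `T_{n,m}(w|q) = ∑_{i=0}^{w} q^{ni} [i]_q^m`. -/
noncomputable def qT {K : Type*} [Field K] (q : K) (n m w : ℕ) : K :=
  ∑ i ∈ Finset.range (w + 1), q ^ (n * i) * qnum q i ^ m

/-- The multinomial coefficient `binom(n; k, l, m) = n! / (k! l! m!)`. -/
def multi3 (n k l m : ℕ) : ℕ :=
  n.factorial / (k.factorial * l.factorial * m.factorial)

theorem factorial_eq_choose_mul_choose_mul {n k l m : ℕ} (h : k + l + m = n) :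
    n.factorial = n.choose k * (n - k).choose l * (k.factorial * l.factorial * m.factorial) := by
  have hlm := Nat.choose_mul_factorial_mul_factorial (Nat.le_add_right l m)
  rw [Nat.add_sub_cancel_left] at hlm
  rw [← Nat.choose_mul_factorial_mul_factorial (show k ≤ n by omega), show n - k = l + m by omega,
    ← hlm]
  ring

theorem multi3_eq_choose_mul_choose {n k l m : ℕ} (h : k + l + m = n) :
    multi3 n k l m = n.choose k * (n - k).choose l := by
  rw [multi3, factorial_eq_choose_mul_choose_mul h, Nat.mul_div_cancel _ (by positivity)]

theorem multi3_succ_eq {N k l m : ℕ} (h : k + l + m = N) :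
    multi3 (N + 1) k l m = (N + 1) * (N.choose k * (N - k).choose l) := by
  rw [multi3, Nat.factorial_succ, factorial_eq_choose_mul_choose_mul h, ← mul_assoc,
    Nat.mul_div_cancel _ (by positivity)]

section
open Polynomial

variable {R : Type*} [CommSemiring R]

noncomputable def umbral (g : ℕ → R) : R[X] →ₗ[R] R :=
  lsum fun n => LinearMap.id.smulRight (g n)

theorem umbral_C_mul_X_pow (g : ℕ → R) (a : R) (n : ℕ) :
    umbral g (C a * X ^ n) = a * g n := by
  rw [C_mul_X_pow_eq_monomial]
  simp [umbral, sum_monomial_index]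

theorem umbral_X_pow_mul_C_mul_X_add_one_pow (g : ℕ → R) (b : R) (m l : ℕ) :
    umbral g (X ^ m * (C b * X + 1) ^ l) =
      ∑ j ∈ range (l + 1), (l.choose j : R) * b ^ j * g (m + j) := by
  rw [add_pow, mul_sum, map_sum]
  refine sum_congr rfl fun j _ => ?_
  rw [← mul_assoc, ← umbral_C_mul_X_pow g _ (m + j)]
  congr 1
  simp only [one_pow, mul_one, mul_pow, C_mul, C_pow, pow_add, map_natCast]
  ring

theorem sum_choose_mul_pow_mul_sum_choose (g : ℕ → R) (a b : R) (r : ℕ) :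
    ∑ l ∈ range (r + 1), (r.choose l : R) * a ^ (r - l) *
        ∑ j ∈ range (l + 1), (l.choose j : R) * b ^ j * g (r - l + j)
      = ∑ s ∈ range (r + 1), (r.choose s : R) * (a + b) ^ s * g s := by
  have hsum := umbral_X_pow_mul_C_mul_X_add_one_pow g (a + b) 0 r
  simp only [pow_zero, one_mul, zero_add] at hsum
  rw [← hsum, show C (a + b) * X + 1 = C b * X + 1 + C a * X by rw [C_add]; ring, add_pow,
    map_sum]
  refine sum_congr rfl fun l _ => ?_
  rw [← umbral_X_pow_mul_C_mul_X_add_one_pow, ← smul_eq_mul, ← map_smul]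
  congr 1
  simp only [smul_eq_C_mul, mul_pow, C_mul, C_pow, map_natCast]
  ring
end

section
variable {K : Type*} [Field K]

theorem qnum_mul_one_sub (q : K) (x : ℕ) : qnum q x * (1 - q) = 1 - q ^ x := by
  rcases eq_or_ne q 1 with rfl | hq
  · simp
  · rw [qnum, div_mul_cancel₀ _ (sub_ne_zero.mpr hq.symm)]

theorem qT_mul_one_sub_pow (P : K) (h m W : ℕ) :
    qT P h m W * (1 - P) ^ m = ∑ i ∈ range (W + 1), P ^ (h * i) * (1 - P ^ i) ^ m := by
  simp only [qT, sum_mul, mul_assoc, ← mul_pow, qnum_mul_one_sub]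

theorem one_sub_pow_mul_carlitzBetaGen {Q : K} (hQ : Q ≠ 1) (X : K) (h m n : ℕ) :
    (1 - Q) ^ n * carlitzBetaGen Q X (m + h) n =
      ∑ j ∈ range (n + 1), (n.choose j : K) * (-X) ^ j *
        (((m + j + h : ℕ) : K) / qnum Q (m + j + h)) := by
  rw [carlitzBetaGen, ← mul_assoc, mul_inv_cancel₀ (pow_ne_zero _ (sub_ne_zero.mpr hQ.symm)),
    one_mul]
  refine sum_congr rfl fun j _ => ?_
  rw [neg_pow, show j + (m + h) = m + j + h by ring]
  ring

theorem sum_choose_mul_pow_mul_carlitzBetaGen {Q : K} (hQ : Q ≠ 1) (Y Z : K) (h r : ℕ) :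
    ∑ l ∈ range (r + 1),
        (r.choose l : K) * Z ^ (r - l) * ((1 - Q) ^ l * carlitzBetaGen Q Y (r - l + h) l)
      = (1 - Q) ^ r * carlitzBetaGen Q (Y - Z) h r := by
  have hr := one_sub_pow_mul_carlitzBetaGen hQ (Y - Z) h 0 r
  simp only [zero_add] at hr
  simp only [one_sub_pow_mul_carlitzBetaGen hQ]
  rw [hr, neg_sub, sub_eq_add_neg,
    sum_choose_mul_pow_mul_sum_choose (fun s => ((s + h : ℕ) : K) / qnum Q (s + h))]

theorem sum_choose_carlitzBetaGen_mul_qT {q : K} {a : ℕ} (hQ : q ^ a ≠ 1) (Y : K)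
    (b h r W : ℕ) :
    ∑ l ∈ range (r + 1), (r.choose l : K) * carlitzBetaGen (q ^ a) Y (r - l + h) l *
        qT (q ^ b) h (r - l) W * Y ^ (r - l) * qnum q a ^ l * qnum q b ^ (r - l)
      = qnum q a ^ r *
          ∑ i ∈ range (W + 1),
            (q ^ b) ^ (h * i) * carlitzBetaGen (q ^ a) (Y * (q ^ b) ^ i) h r := by
  set Q := q ^ a
  set P := q ^ b
  have hAB : ∀ l ∈ range (r + 1),
      qnum q a ^ l * qnum q b ^ (r - l) = (1 - Q) ^ l * (1 - P) ^ (r - l) / (1 - q) ^ r := by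
    intro l hl
    rw [qnum, qnum, div_pow, div_pow, div_mul_div_comm, ← pow_add,
      Nat.add_sub_cancel' (Nat.lt_succ_iff.mp (mem_range.mp hl))]
  calc _ = ((1 - q) ^ r)⁻¹ * ∑ i ∈ range (W + 1), P ^ (h * i) *
          ∑ l ∈ range (r + 1), (r.choose l : K) * (Y - Y * P ^ i) ^ (r - l) *
            ((1 - Q) ^ l * carlitzBetaGen Q Y (r - l + h) l) := by
        simp only [mul_sum]
        rw [sum_comm]
        refine sum_congr rfl fun l hl => ?_
        calc _ = (r.choose l : K) * Y ^ (r - l) * ((1 - Q) ^ l * carlitzBetaGen Q Y (r - l + h) l) /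
                (1 - q) ^ r * (qT P h (r - l) W * (1 - P) ^ (r - l)) := by
              rw [mul_assoc, hAB l hl]
              ring
          _ = _ := by
              rw [qT_mul_one_sub_pow, mul_sum]
              refine sum_congr rfl fun i _ => ?_
              rw [show Y - Y * P ^ i = Y * (1 - P ^ i) by ring, mul_pow]
              ring
    _ = ((1 - q) ^ r)⁻¹ * ∑ i ∈ range (W + 1), P ^ (h * i) *
          ((1 - Q) ^ r * carlitzBetaGen Q (Y * P ^ i) h r) := by
        simp only [sum_choose_mul_pow_mul_carlitzBetaGen hQ, sub_sub_cancel]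
    _ = _ := by
        rw [qnum, div_pow, mul_sum, mul_sum]
        exact sum_congr rfl fun i _ => by ring

/- Both double sums of the theorem are instances: `M` is the multinomial coefficient, which
factors as `c * binom(N,k) * binom(N-k,l)`, and the exponents are written with `h - 1` so that
`h = 2` and `h = 1` reproduce them. -/
theorem sum_sum_carlitzBetaH_mul_qT (q : K) (w1 w2 w3 y1 y2 : ℕ) (hQ : q ^ (w1 * w3) ≠ 1)
    (hw3 : 0 < w3) (N h : ℕ) (c : K) (M : ℕ → ℕ → K)
    (hM : ∀ k l, k + l ≤ N → M k l = c * (N.choose k * (N - k).choose l)) :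
    ∑ k ∈ range (N + 1), ∑ l ∈ range (N + 1 - k),
        M k l * carlitzBetaH (q ^ (w2 * w3)) (l + (N - k - l) + h) k (w1 * y1) *
          carlitzBetaH (q ^ (w1 * w3)) ((N - k - l) + h) l (w2 * y2) *
          qT (q ^ (w1 * w2)) h (N - k - l) (w3 - 1) *
          q ^ (w1 * w2 * w3 * (l + (N - k - l) + (h - 1)) * y1) *
          q ^ (w1 * w2 * w3 * ((N - k - l) + (h - 1)) * y2) *
          qnum q (w2 * w3) ^ k * qnum q (w1 * w3) ^ l * qnum q (w1 * w2) ^ ((N - k - l) + 1)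
      = c * ∑ k ∈ range (N + 1), (N.choose k : K) *
          carlitzBetaH (q ^ (w2 * w3)) (N - k + h) k (w1 * y1) *
          q ^ (w1 * w2 * w3 * (N - k + (h - 1)) * y1) * q ^ (w1 * w2 * w3 * (h - 1) * y2) *
          qnum q (w1 * w2) * qnum q (w2 * w3) ^ k * qnum q (w1 * w3) ^ (N - k) *
          ∑ i ∈ range w3, q ^ (h * (w1 * w2) * i) *
            carlitzBetaGen (q ^ (w1 * w3)) (q ^ (w1 * w2 * w3 * y2 + w1 * w2 * i)) h (N - k) := by
  have hY : (q ^ (w1 * w3)) ^ (w2 * y2) = q ^ (w1 * w2 * w3 * y2) := by ring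
  rw [mul_sum]
  refine sum_congr rfl fun k hk => ?_
  have hkN : k ≤ N := Nat.lt_succ_iff.mp (mem_range.mp hk)
  have hinner := sum_choose_carlitzBetaGen_mul_qT hQ (q ^ (w1 * w2 * w3 * y2)) (w1 * w2) h (N - k)
    (w3 - 1)
  rw [Nat.sub_add_cancel hw3] at hinner
  rw [show N + 1 - k = N - k + 1 by omega]
  calc _ = c * (N.choose k : K) * carlitzBetaH (q ^ (w2 * w3)) (N - k + h) k (w1 * y1) *
          q ^ (w1 * w2 * w3 * (N - k + (h - 1)) * y1) * q ^ (w1 * w2 * w3 * (h - 1) * y2) *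
          qnum q (w1 * w2) * qnum q (w2 * w3) ^ k *
          ∑ l ∈ range (N - k + 1), ((N - k).choose l : K) *
            carlitzBetaGen (q ^ (w1 * w3)) (q ^ (w1 * w2 * w3 * y2)) (N - k - l + h) l *
            qT (q ^ (w1 * w2)) h (N - k - l) (w3 - 1) * (q ^ (w1 * w2 * w3 * y2)) ^ (N - k - l) *
            qnum q (w1 * w3) ^ l * qnum q (w1 * w2) ^ (N - k - l) := by
        rw [mul_sum]
        refine sum_congr rfl fun l hl => ?_
        have hlk : l ≤ N - k := Nat.lt_succ_iff.mp (mem_range.mp hl)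
        rw [hM k l (by omega), show l + (N - k - l) = N - k by omega]
        simp only [carlitzBetaH, hY]
        ring
    _ = _ := by
        have hsum : ∀ i ∈ range w3, (q ^ (w1 * w2)) ^ (h * i) *
              carlitzBetaGen (q ^ (w1 * w3)) (q ^ (w1 * w2 * w3 * y2) * (q ^ (w1 * w2)) ^ i) h
                (N - k)
            = q ^ (h * (w1 * w2) * i) *
              carlitzBetaGen (q ^ (w1 * w3)) (q ^ (w1 * w2 * w3 * y2 + w1 * w2 * i)) h (N - k) := by
          intro i _
          rw [← pow_mul, ← pow_mul, ← pow_add,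
            show w1 * w2 * (h * i) = h * (w1 * w2) * i by ring]
        rw [hinner, sum_congr rfl hsum]
        ring
end

theorem stmt6_general {K : Type*} [Field K] (q : K)
    (hq' : ∀ n : ℕ, 0 < n → q ^ n ≠ 1)
    (w1 w2 w3 : ℕ) (hw1 : 0 < w1) (hw3 : 0 < w3)
    (y1 y2 n : ℕ) (hn : 0 < n) :
    (∑ k ∈ Finset.range n, ∑ l ∈ Finset.range (n - k),
      (multi3 n k l (n - 1 - k - l) : K) *
        carlitzBetaH (q ^ (w2 * w3)) (l + (n - 1 - k - l) + 2) k (w1 * y1) *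
        carlitzBetaH (q ^ (w1 * w3)) ((n - 1 - k - l) + 2) l (w2 * y2) *
        qT (q ^ (w1 * w2)) 2 (n - 1 - k - l) (w3 - 1) *
        q ^ (w1 * w2 * w3 * (l + (n - 1 - k - l) + 1) * y1) *
        q ^ (w1 * w2 * w3 * ((n - 1 - k - l) + 1) * y2) *
        qnum q (w2 * w3) ^ k * qnum q (w1 * w3) ^ l *
        qnum q (w1 * w2) ^ ((n - 1 - k - l) + 1))
    + (q - 1) *
      (∑ k ∈ Finset.range (n + 1), ∑ l ∈ Finset.range (n + 1 - k),
        (multi3 n k l (n - k - l) : K) *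
          carlitzBetaH (q ^ (w2 * w3)) (l + (n - k - l) + 1) k (w1 * y1) *
          carlitzBetaH (q ^ (w1 * w3)) ((n - k - l) + 1) l (w2 * y2) *
          qT (q ^ (w1 * w2)) 1 (n - k - l) (w3 - 1) *
          q ^ (w1 * w2 * w3 * (l + (n - k - l)) * y1) *
          q ^ (w1 * w2 * w3 * (n - k - l) * y2) *
          qnum q (w2 * w3) ^ k * qnum q (w1 * w3) ^ l *
          qnum q (w1 * w2) ^ ((n - k - l) + 1))
    = (n : K) *
        (∑ k ∈ Finset.range n,
          ((n - 1).choose k : K) *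
            carlitzBetaH (q ^ (w2 * w3)) (n - k + 1) k (w1 * y1) *
            q ^ (w1 * w2 * w3 * (n - k) * y1) * q ^ (w1 * w2 * w3 * y2) *
            qnum q (w1 * w2) * qnum q (w2 * w3) ^ k * qnum q (w1 * w3) ^ (n - 1 - k) *
            ∑ i ∈ Finset.range w3,
              q ^ (2 * (w1 * w2) * i) *
                carlitzBetaGen (q ^ (w1 * w3)) (q ^ (w1 * w2 * w3 * y2 + w1 * w2 * i)) 2
                  (n - 1 - k))
      + (q - 1) *
        ∑ k ∈ Finset.range (n + 1),
          (n.choose k : K) *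
            carlitzBetaH (q ^ (w2 * w3)) (n - k + 1) k (w1 * y1) *
            q ^ (w1 * w2 * w3 * (n - k) * y1) *
            qnum q (w1 * w2) * qnum q (w2 * w3) ^ k * qnum q (w1 * w3) ^ (n - k) *
            ∑ i ∈ Finset.range w3,
              q ^ (w1 * w2 * i) *
                carlitzBetaGen (q ^ (w1 * w3)) (q ^ (w1 * w2 * w3 * y2 + w1 * w2 * i)) 1
                  (n - k) := by
  obtain ⟨N, rfl⟩ : ∃ N, n = N + 1 := ⟨n - 1, by omega⟩
  have hQ : q ^ (w1 * w3) ≠ 1 := hq' _ (Nat.mul_pos hw1 hw3)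
  have hsum₂ := sum_sum_carlitzBetaH_mul_qT q w1 w2 w3 y1 y2 hQ hw3 N 2 ((N + 1 : ℕ) : K)
    (fun k l => (multi3 (N + 1) k l (N - k - l) : K)) fun k l hkl => by
      rw [multi3_succ_eq (by omega)]
      push_cast
      ring
  have hsum₁ := sum_sum_carlitzBetaH_mul_qT q w1 w2 w3 y1 y2 hQ hw3 (N + 1) 1 1
    (fun k l => (multi3 (N + 1) k l (N + 1 - k - l) : K)) fun k l hkl => by
      rw [multi3_eq_choose_mul_choose (by omega)]
      push_cast
      ring
  simp only [Nat.add_sub_cancel, Nat.reduceSub, Nat.sub_self, add_zero, mul_zero, zero_mul,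
    pow_zero, mul_one, one_mul] at hsum₂ hsum₁ ⊢
  rw [hsum₂, hsum₁]
  congr 2
  refine sum_congr rfl fun k hk => ?_
  rw [show N + 1 - k = N - k + 1 by have := mem_range.mp hk; omega]

/-- For positive integers `w₁, w₂, w₃`, nonnegative integers `y₁, y₂`
and a positive integer `n`, the two expressions for `I₁` obtained in the paper
(the one of Theorem 3 and the one of Theorem 4) coincide; the value
`β_{n,Q}^{(h)}(w₂y₂ + (w₂/w₃)i)` with `Q = q^{w₁w₃}` is interpreted via
`Q^{j(w₂y₂ + (w₂/w₃)i)} = q^{j(w₁w₂w₃y₂ + w₁w₂ i)}`. -/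
theorem stmt6 {K : Type*} [Field K] [CharZero K] (q : K) (hq : q ≠ 1)
    (hq' : ∀ n : ℕ, 0 < n → q ^ n ≠ 1)
    (w1 w2 w3 : ℕ) (hw1 : 0 < w1) (hw2 : 0 < w2) (hw3 : 0 < w3)
    (y1 y2 n : ℕ) (hn : 0 < n) :
    (∑ k ∈ Finset.range n, ∑ l ∈ Finset.range (n - k),
      (multi3 n k l (n - 1 - k - l) : K) *
        carlitzBetaH (q ^ (w2 * w3)) (l + (n - 1 - k - l) + 2) k (w1 * y1) *
        carlitzBetaH (q ^ (w1 * w3)) ((n - 1 - k - l) + 2) l (w2 * y2) *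
        qT (q ^ (w1 * w2)) 2 (n - 1 - k - l) (w3 - 1) *
        q ^ (w1 * w2 * w3 * (l + (n - 1 - k - l) + 1) * y1) *
        q ^ (w1 * w2 * w3 * ((n - 1 - k - l) + 1) * y2) *
        qnum q (w2 * w3) ^ k * qnum q (w1 * w3) ^ l *
        qnum q (w1 * w2) ^ ((n - 1 - k - l) + 1))
    + (q - 1) *
      (∑ k ∈ Finset.range (n + 1), ∑ l ∈ Finset.range (n + 1 - k),
        (multi3 n k l (n - k - l) : K) *
          carlitzBetaH (q ^ (w2 * w3)) (l + (n - k - l) + 1) k (w1 * y1) *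
          carlitzBetaH (q ^ (w1 * w3)) ((n - k - l) + 1) l (w2 * y2) *
          qT (q ^ (w1 * w2)) 1 (n - k - l) (w3 - 1) *
          q ^ (w1 * w2 * w3 * (l + (n - k - l)) * y1) *
          q ^ (w1 * w2 * w3 * (n - k - l) * y2) *
          qnum q (w2 * w3) ^ k * qnum q (w1 * w3) ^ l *
          qnum q (w1 * w2) ^ ((n - k - l) + 1))
    = (n : K) *
        (∑ k ∈ Finset.range n,
          ((n - 1).choose k : K) *
            carlitzBetaH (q ^ (w2 * w3)) (n - k + 1) k (w1 * y1) *
            q ^ (w1 * w2 * w3 * (n - k) * y1) * q ^ (w1 * w2 * w3 * y2) *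
            qnum q (w1 * w2) * qnum q (w2 * w3) ^ k * qnum q (w1 * w3) ^ (n - 1 - k) *
            ∑ i ∈ Finset.range w3,
              q ^ (2 * (w1 * w2) * i) *
                carlitzBetaGen (q ^ (w1 * w3)) (q ^ (w1 * w2 * w3 * y2 + w1 * w2 * i)) 2
                  (n - 1 - k))
      + (q - 1) *
        ∑ k ∈ Finset.range (n + 1),
          (n.choose k : K) *
            carlitzBetaH (q ^ (w2 * w3)) (n - k + 1) k (w1 * y1) *
            q ^ (w1 * w2 * w3 * (n - k) * y1) *
            qnum q (w1 * w2) * qnum q (w2 * w3) ^ k * qnum q (w1 * w3) ^ (n - k) *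
            ∑ i ∈ Finset.range w3,
              q ^ (w1 * w2 * i) *
                carlitzBetaGen (q ^ (w1 * w3)) (q ^ (w1 * w2 * w3 * y2 + w1 * w2 * i)) 1
                  (n - k) :=
  stmt6_general q hq' w1 w2 w3 hw1 hw3 y1 y2 n hn
end
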